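/- arXiv:2501.03846 — 2 statements merged into one kernel-verified Lean document; each statement's English description precedes it below -/
import Mathlib

section
/- Let X be a finite connected undirected graph and let α be a voltage assignment on X with values in a finite abelian group G. Let Z be a connected component of the derived graph X(G,α), and let H ≤ G be the stabilizer of Z under the action of G on the set of connected components of X(G,α) (induced by h·(v,g) = (v,hg)). Then Z is isomorphic to the derived graph of an H-valued voltage assignment on X, and Z/X is a Galois covering whose Galois group is isomorphic to H. -/
/-! # Multigraphs, coverings, voltage assignments

Directed multigraphs (with loops and multiple edges allowed), undirected multigraphs
(encoded à la Serre, as directed graphs with an edge-inversion), morphisms, coverings,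
sheet numbers, deck transformation groups, Galois coverings, voltage assignments and
their derived graphs, connectedness, connected components, directed cycle graphs,
abstract (tectonic) craters and (tectonic) `l`-volcanoes. -/

/-- A directed multigraph. -/
structure Digraph' : Type 1 where
  V : Type
  E : Type
  src : E → V
  tgt : E → V

namespace Digraph'

variable (X : Digraph')

/-- Two vertices are adjacent if some edge goes from the first to the second. -/
def Adj (v w : X.V) : Prop := ∃ e : X.E, X.src e = v ∧ X.tgt e = w

/-- Two vertices lie in the same connected component (of the underlying
undirected graph). -/
def Reach (v w : X.V) : Prop := Relation.EqvGen X.Adj v w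

/-- A graph is connected if any two vertices lie in the same connected component. -/
def Connected : Prop := ∀ v w : X.V, X.Reach v w

/-- The set of vertices of the connected component containing `v`. -/
def ComponentSet (v : X.V) : Set X.V := {w | X.Reach v w}

/-- The number of connected components. -/
noncomputable def NumComponents : ℕ := Nat.card (Quot X.Adj)

/-- The subgraph generated by a set `S` of vertices: its edges are the edges of `X`
having both endpoints in `S`. -/
def induced (S : Set X.V) : Digraph' where
  V := S
  E := {e : X.E // X.src e ∈ S ∧ X.tgt e ∈ S}
  src e := ⟨X.src e.1, e.2.1⟩
  tgt e := ⟨X.tgt e.1, e.2.2⟩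

end Digraph'

/-- A morphism of directed multigraphs. -/
structure DigraphHom (Y X : Digraph') where
  onV : Y.V → X.V
  onE : Y.E → X.E
  map_src : ∀ e, X.src (onE e) = onV (Y.src e)
  map_tgt : ∀ e, X.tgt (onE e) = onV (Y.tgt e)

namespace DigraphHom

/-- The identity morphism. -/
def id (X : Digraph') : DigraphHom X X :=
  ⟨fun v => v, fun e => e, fun _ => rfl, fun _ => rfl⟩

/-- Composition of morphisms of directed multigraphs. -/
def comp {Z Y X : Digraph'} (g : DigraphHom Y X) (f : DigraphHom Z Y) :
    DigraphHom Z X where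
  onV := g.onV ∘ f.onV
  onE := g.onE ∘ f.onE
  map_src e := by simp only [Function.comp_apply, g.map_src, f.map_src]
  map_tgt e := by simp only [Function.comp_apply, g.map_tgt, f.map_tgt]

end DigraphHom

/-- A covering of directed multigraphs: a surjective morphism which is a local
bijection (it restricts to a bijection on the edges emanating from, respectively
arriving at, each given vertex). -/
def IsGraphCovering {Y X : Digraph'} (f : DigraphHom Y X) : Prop :=
  Function.Surjective f.onV ∧
    (∀ v : Y.V, Set.BijOn f.onE {e | Y.src e = v} {e | X.src e = f.onV v}) ∧
    (∀ v : Y.V, Set.BijOn f.onE {e | Y.tgt e = v} {e | X.tgt e = f.onV v})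

/-- A morphism of graphs is `d`-sheeted if every vertex downstairs has exactly `d`
preimages. -/
def IsSheeted {Y X : Digraph'} (f : DigraphHom Y X) (d : ℕ) : Prop :=
  ∀ x : X.V, Nat.card {y : Y.V // f.onV y = x} = d

/-- The group of deck transformations of `f : Y → X`: pairs of permutations of the
vertices and of the edges of `Y` which are compatible with the graph structure and
commute with `f`. -/
def DeckGroup {Y X : Digraph'} (f : DigraphHom Y X) :
    Subgroup (Equiv.Perm Y.V × Equiv.Perm Y.E) where
  carrier := {σ | (∀ e, Y.src (σ.2 e) = σ.1 (Y.src e)) ∧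
    (∀ e, Y.tgt (σ.2 e) = σ.1 (Y.tgt e)) ∧
    (∀ v, f.onV (σ.1 v) = f.onV v) ∧ (∀ e, f.onE (σ.2 e) = f.onE e)}
  one_mem' := ⟨fun _ => rfl, fun _ => rfl, fun _ => rfl, fun _ => rfl⟩
  mul_mem' := by
    rintro σ τ ⟨h1, h2, h3, h4⟩ ⟨g1, g2, g3, g4⟩
    exact ⟨fun e => by simp [Equiv.Perm.mul_apply, h1, g1],
      fun e => by simp [Equiv.Perm.mul_apply, h2, g2],
      fun v => by simp [Equiv.Perm.mul_apply, h3, g3],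
      fun e => by simp [Equiv.Perm.mul_apply, h4, g4]⟩
  inv_mem' := by
    rintro σ ⟨h1, h2, h3, h4⟩
    refine ⟨fun e => ?_, fun e => ?_, fun v => ?_, fun e => ?_⟩
    · have := h1 (σ.2⁻¹ e)
      simp only [← Equiv.Perm.mul_apply, mul_inv_cancel, Equiv.Perm.one_apply] at this
      simp [Prod.fst_inv, Prod.snd_inv, this]
    · have := h2 (σ.2⁻¹ e)
      simp only [← Equiv.Perm.mul_apply, mul_inv_cancel, Equiv.Perm.one_apply] at this
      simp [Prod.fst_inv, Prod.snd_inv, this]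
    · have := h3 (σ.1⁻¹ v)
      simp only [← Equiv.Perm.mul_apply, mul_inv_cancel, Equiv.Perm.one_apply] at this
      simp [Prod.fst_inv, this]
    · have := h4 (σ.2⁻¹ e)
      simp only [← Equiv.Perm.mul_apply, mul_inv_cancel, Equiv.Perm.one_apply] at this
      simp [Prod.snd_inv, this]

/-- A covering is Galois if it is `d`-sheeted where `d` is the number of its deck
transformations. -/
def IsGaloisCov {Y X : Digraph'} (f : DigraphHom Y X) : Prop :=
  IsGraphCovering f ∧ ∃ d : ℕ, IsSheeted f d ∧ Nat.card ↥(DeckGroup f) = d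

/-- An isomorphism of directed multigraphs. -/
structure DigraphIso (Y X : Digraph') where
  onV : Y.V ≃ X.V
  onE : Y.E ≃ X.E
  map_src : ∀ e, X.src (onE e) = onV (Y.src e)
  map_tgt : ∀ e, X.tgt (onE e) = onV (Y.tgt e)

/-- An undirected multigraph, encoded à la Serre: every undirected edge is recorded
as a pair of mutually inverse directed edges. -/
structure SerreGraph : Type 1 extends Digraph' where
  inv : E → E
  inv_inv : ∀ e, inv (inv e) = e
  src_inv : ∀ e, src (inv e) = tgt e
  tgt_inv : ∀ e, tgt (inv e) = src e

namespace SerreGraph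

variable (X : SerreGraph)

/-- The subgraph of an undirected multigraph generated by a set `S` of vertices. -/
def inducedClosed (S : Set X.V) : SerreGraph where
  V := S
  E := {e : X.E // X.src e ∈ S ∧ X.tgt e ∈ S}
  src e := ⟨X.src e.1, e.2.1⟩
  tgt e := ⟨X.tgt e.1, e.2.2⟩
  inv e := ⟨X.inv e.1, by rw [X.src_inv, X.tgt_inv]; exact ⟨e.2.2, e.2.1⟩⟩
  inv_inv e := Subtype.ext (X.inv_inv e.1)
  src_inv e := Subtype.ext (X.src_inv e.1)
  tgt_inv e := Subtype.ext (X.tgt_inv e.1)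

/-- The connected component of a vertex, as an undirected multigraph. -/
def component (v : X.V) : SerreGraph :=
  X.inducedClosed (X.toDigraph'.ComponentSet v)

end SerreGraph

/-- The undirected multigraph underlying a directed multigraph (the image of the
directed graph under the forgetful map). -/
def Digraph'.toSerre (X : Digraph') : SerreGraph where
  V := X.V
  E := X.E × Bool
  src e := if e.2 then X.src e.1 else X.tgt e.1
  tgt e := if e.2 then X.tgt e.1 else X.src e.1
  inv e := (e.1, !e.2)
  inv_inv e := by cases e with
    | mk a b => cases b <;> rfl
  src_inv e := by cases e with
    | mk a b => cases b <;> rfl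
  tgt_inv e := by cases e with
    | mk a b => cases b <;> rfl

/-- A morphism of undirected multigraphs. -/
structure SerreHom (Y X : SerreGraph) where
  onV : Y.V → X.V
  onE : Y.E → X.E
  map_src : ∀ e, X.src (onE e) = onV (Y.src e)
  map_tgt : ∀ e, X.tgt (onE e) = onV (Y.tgt e)
  map_inv : ∀ e, X.inv (onE e) = onE (Y.inv e)

/-- The underlying morphism of directed multigraphs. -/
def SerreHom.toDigraphHom {Y X : SerreGraph} (f : SerreHom Y X) :
    DigraphHom Y.toDigraph' X.toDigraph' :=
  ⟨f.onV, f.onE, f.map_src, f.map_tgt⟩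

/-- An isomorphism of undirected multigraphs. -/
structure SerreIso (Y X : SerreGraph) where
  onV : Y.V ≃ X.V
  onE : Y.E ≃ X.E
  map_src : ∀ e, X.src (onE e) = onV (Y.src e)
  map_tgt : ∀ e, X.tgt (onE e) = onV (Y.tgt e)
  map_inv : ∀ e, X.inv (onE e) = onE (Y.inv e)

/-- The group of deck transformations of a morphism of undirected multigraphs. -/
def SerreDeckGroup {Y X : SerreGraph} (f : SerreHom Y X) :
    Subgroup (Equiv.Perm Y.V × Equiv.Perm Y.E) where
  carrier := {σ | (∀ e, Y.src (σ.2 e) = σ.1 (Y.src e)) ∧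
    (∀ e, Y.tgt (σ.2 e) = σ.1 (Y.tgt e)) ∧
    (∀ e, Y.inv (σ.2 e) = σ.2 (Y.inv e)) ∧
    (∀ v, f.onV (σ.1 v) = f.onV v) ∧ (∀ e, f.onE (σ.2 e) = f.onE e)}
  one_mem' := ⟨fun _ => rfl, fun _ => rfl, fun _ => rfl, fun _ => rfl, fun _ => rfl⟩
  mul_mem' := by
    rintro σ τ ⟨h1, h2, h3, h4, h5⟩ ⟨g1, g2, g3, g4, g5⟩
    exact ⟨fun e => by simp [Equiv.Perm.mul_apply, h1, g1],
      fun e => by simp [Equiv.Perm.mul_apply, h2, g2],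
      fun e => by simp [Equiv.Perm.mul_apply, h3, g3],
      fun v => by simp [Equiv.Perm.mul_apply, h4, g4],
      fun e => by simp [Equiv.Perm.mul_apply, h5, g5]⟩
  inv_mem' := by
    rintro σ ⟨h1, h2, h3, h4, h5⟩
    refine ⟨fun e => ?_, fun e => ?_, fun e => ?_, fun v => ?_, fun e => ?_⟩
    · have := h1 (σ.2⁻¹ e)
      simp only [← Equiv.Perm.mul_apply, mul_inv_cancel, Equiv.Perm.one_apply] at this
      simp [Prod.fst_inv, Prod.snd_inv, this]
    · have := h2 (σ.2⁻¹ e)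
      simp only [← Equiv.Perm.mul_apply, mul_inv_cancel, Equiv.Perm.one_apply] at this
      simp [Prod.fst_inv, Prod.snd_inv, this]
    · have := h3 (σ.2⁻¹ e)
      simp only [← Equiv.Perm.mul_apply, mul_inv_cancel, Equiv.Perm.one_apply] at this
      simp only [Prod.snd_inv]
      rw [this]
      simp
    · have := h4 (σ.1⁻¹ v)
      simp only [← Equiv.Perm.mul_apply, mul_inv_cancel, Equiv.Perm.one_apply] at this
      simp [Prod.fst_inv, this]
    · have := h5 (σ.2⁻¹ e)
      simp only [← Equiv.Perm.mul_apply, mul_inv_cancel, Equiv.Perm.one_apply] at this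
      simp [Prod.snd_inv, this]

/-- A morphism of undirected multigraphs is a Galois covering if it is a covering
which is `d`-sheeted, where `d` is the number of its deck transformations. -/
def IsGaloisSerreCov {Y X : SerreGraph} (f : SerreHom Y X) : Prop :=
  IsGraphCovering f.toDigraphHom ∧
    ∃ d : ℕ, IsSheeted f.toDigraphHom d ∧ Nat.card ↥(SerreDeckGroup f) = d
/-- A voltage assignment on an undirected multigraph, with values in a
(multiplicative) group `G`. -/
structure Voltage (X : SerreGraph) (G : Type) [Group G] where
  fn : X.E → G
  compat : ∀ e, fn (X.inv e) = (fn e)⁻¹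

/-- The derived graph of a (multiplicative) voltage assignment. -/
def SerreGraph.derived (X : SerreGraph) (G : Type) [Group G] (α : Voltage X G) :
    SerreGraph where
  V := X.V × G
  E := X.E × G
  src e := (X.src e.1, e.2)
  tgt e := (X.tgt e.1, e.2 * α.fn e.1)
  inv e := (X.inv e.1, e.2 * α.fn e.1)
  inv_inv e := by
    obtain ⟨a, g⟩ := e
    simp [α.compat, X.inv_inv, mul_assoc]
  src_inv e := by
    obtain ⟨a, g⟩ := e
    simp [X.src_inv]
  tgt_inv e := by
    obtain ⟨a, g⟩ := e
    simp [X.tgt_inv, α.compat, mul_assoc]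

/-- A voltage assignment on an undirected multigraph, with values in an additive
group `G`. -/
structure AddVoltage (X : SerreGraph) (G : Type) [AddGroup G] where
  fn : X.E → G
  compat : ∀ e, fn (X.inv e) = -(fn e)

/-- Post-composition of an additive voltage assignment with a map of additive
groups preserving negation. -/
def AddVoltage.comp {X : SerreGraph} {G H : Type} [AddGroup G] [AddGroup H]
    (α : AddVoltage X G) (f : G → H) (hf : ∀ x, f (-x) = -(f x)) : AddVoltage X H :=
  ⟨fun e => f (α.fn e), fun e => by show f (α.fn (X.inv e)) = -(f (α.fn e)); rw [α.compat, hf]⟩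

/-- The derived graph of an additive voltage assignment. -/
def SerreGraph.derivedAdd (X : SerreGraph) (G : Type) [AddGroup G]
    (α : AddVoltage X G) : SerreGraph where
  V := X.V × G
  E := X.E × G
  src e := (X.src e.1, e.2)
  tgt e := (X.tgt e.1, e.2 + α.fn e.1)
  inv e := (X.inv e.1, e.2 + α.fn e.1)
  inv_inv e := by
    obtain ⟨a, g⟩ := e
    simp [α.compat, X.inv_inv, add_assoc]
  src_inv e := by
    obtain ⟨a, g⟩ := e
    simp [X.src_inv]
  tgt_inv e := by
    obtain ⟨a, g⟩ := e
    simp [X.tgt_inv, α.compat, add_assoc]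

/-! Left translation by `G` acts on `X(G, α)` by graph automorphisms, so reachability in the derived
graph is `G`-equivariant. As `X` is connected, the component `Z` of `z` meets every fibre: pick
`(v, φ v) ∈ Z` for each vertex `v`. Then `(v, g) ∈ Z` exactly when `g φ(v)⁻¹ ∈ H`, and
`(v, g) ↦ (v, g φ(v)⁻¹)` identifies `Z` with the derived graph of the `H`-valued voltage
`e ↦ φ(src e) α(e) φ(tgt e)⁻¹`; in particular every fibre of `Z → X` is in bijection with `H`.
Translations by `H` are deck transformations of `Z → X`, and by unique lifting of edges a deck
transformation is the translation by the `h` with `σ z = h z`, so `Deck(Z/X) ≅ H`. -/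

namespace Digraph'

variable {X : Digraph'}

theorem reach_tgt_iff_src {v : X.V} (e : X.E) : X.Reach v (X.tgt e) ↔ X.Reach v (X.src e) :=
  have hadj : X.Reach (X.src e) (X.tgt e) := .rel _ _ ⟨e, rfl, rfl⟩
  ⟨fun h => .trans _ _ _ h (.symm _ _ hadj), fun h => .trans _ _ _ h hadj⟩

theorem Reach.of_edge_iff {p : X.V → Prop} {z w : X.V} (hz : p z)
    (hstep : ∀ e, X.Reach z (X.src e) → (p (X.src e) ↔ p (X.tgt e))) (hw : X.Reach z w) :
    p w := by
  suffices H : ∀ a b, X.Reach a b → X.Reach z a → (p a ↔ p b) from (H z w hw (.refl z)).mp hz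
  intro a b hab
  induction hab with
  | rel a b hab =>
    obtain ⟨e, rfl, rfl⟩ := hab
    exact hstep e
  | refl a => exact fun _ => Iff.rfl
  | symm a b hab ih => exact fun hb => (ih (.trans _ _ _ hb (.symm _ _ hab))).symm
  | trans a b c hab _ ih₁ ih₂ => exact fun ha => (ih₁ ha).trans (ih₂ (.trans _ _ _ ha hab))

end Digraph'

namespace SerreGraph

variable (X : SerreGraph) (v : X.V)

theorem invOn_inv : Set.InvOn X.inv X.inv {e | X.tgt e = v} {e | X.src e = v} :=
  ⟨fun e _ => X.inv_inv e, fun e _ => X.inv_inv e⟩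

theorem bijOn_inv_tgt_src : Set.BijOn X.inv {e | X.tgt e = v} {e | X.src e = v} :=
  (X.invOn_inv v).bijOn (fun e he => (X.src_inv e).trans he) (fun e he => (X.tgt_inv e).trans he)

theorem bijOn_inv_src_tgt : Set.BijOn X.inv {e | X.src e = v} {e | X.tgt e = v} :=
  (X.invOn_inv v).symm.bijOn (fun e he => (X.tgt_inv e).trans he)
    (fun e he => (X.src_inv e).trans he)

end SerreGraph

theorem SerreHom.isGraphCovering_of_bijOn_src {Y X : SerreGraph} (f : SerreHom Y X)
    (hsurj : Function.Surjective f.onV)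
    (hsrc : ∀ v, Set.BijOn f.onE {e | Y.src e = v} {e | X.src e = f.onV v}) :
    IsGraphCovering f.toDigraphHom := by
  refine ⟨hsurj, hsrc, fun v => ?_⟩
  have hf : f.onE = X.inv ∘ f.onE ∘ Y.inv := funext fun e => by
    simp only [Function.comp_apply, f.map_inv, Y.inv_inv]
  change Set.BijOn f.onE {e | Y.tgt e = v} {e | X.tgt e = f.onV v}
  rw [hf]
  exact (X.bijOn_inv_src_tgt _).comp ((hsrc v).comp (Y.bijOn_inv_tgt_src v))

def cosetShiftEquiv {G : Type} [Group G] {A : Type} (H : Subgroup G) (ψ : A → G) :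
    {p : A × G // p.2 * (ψ p.1)⁻¹ ∈ H} ≃ A × H where
  toFun p := (p.1.1, ⟨p.1.2 * (ψ p.1.1)⁻¹, p.2⟩)
  invFun q := ⟨(q.1, q.2 * ψ q.1), by simp⟩
  left_inv p := by simp
  right_inv q := by simp

namespace Voltage

variable {X : SerreGraph} {G : Type} [Group G]

section

variable (α : Voltage X G)

theorem reach_smul (h : G) {v w : (X.derived G α).V} (hvw : (X.derived G α).Reach v w) :
    (X.derived G α).Reach (v.1, h * v.2) (w.1, h * w.2) := by
  induction hvw with
  | rel a b hab =>
    obtain ⟨e, rfl, rfl⟩ := hab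
    exact .rel _ _ ⟨(e.1, h * e.2), rfl, Prod.ext rfl (mul_assoc _ _ _)⟩
  | refl a => exact .refl _
  | symm a b _ ih => exact .symm _ _ ih
  | trans a b c _ _ ih₁ ih₂ => exact .trans _ _ _ ih₁ ih₂

theorem exists_reach_of_reach {a b : X.V} (hab : X.Reach a b) :
    ∃ g g' : G, (X.derived G α).Reach (a, g) (b, g') := by
  induction hab with
  | rel a b hab =>
    obtain ⟨e, rfl, rfl⟩ := hab
    exact ⟨1, 1 * α.fn e, .rel _ _ ⟨(e, 1), rfl, rfl⟩⟩
  | refl a => exact ⟨1, 1, .refl _⟩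
  | symm a b _ ih =>
    obtain ⟨g, g', h⟩ := ih
    exact ⟨g', g, .symm _ _ h⟩
  | trans a b c _ _ ih₁ ih₂ =>
    obtain ⟨g₁, g₂, h₁₂⟩ := ih₁
    obtain ⟨g₃, g₄, h₃₄⟩ := ih₂
    have h₂₄ := reach_smul α (g₂ * g₃⁻¹) h₃₄
    rw [inv_mul_cancel_right] at h₂₄
    exact ⟨g₁, g₂ * g₃⁻¹ * g₄, .trans _ _ _ h₁₂ h₂₄⟩

variable (z : (X.derived G α).V)

theorem exists_reach_fiber (hconn : X.Connected) (v : X.V) :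
    ∃ g : G, (X.derived G α).Reach z (v, g) := by
  obtain ⟨g, g', h⟩ := exists_reach_of_reach α (hconn z.1 v)
  have := reach_smul α (z.2 * g⁻¹) h
  rw [inv_mul_cancel_right] at this
  exact ⟨_, this⟩

def componentProj : SerreHom ((X.derived G α).component z) X where
  onV w := w.1.1
  onE e := e.1.1
  map_src _ := rfl
  map_tgt _ := rfl
  map_inv _ := rfl

theorem isGraphCovering_componentProj (hconn : X.Connected) :
    IsGraphCovering (componentProj α z).toDigraphHom := by
  refine (componentProj α z).isGraphCovering_of_bijOn_src (fun v => ?_) fun w => ⟨?_, ?_, ?_⟩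
  · obtain ⟨g, hg⟩ := exists_reach_fiber α z hconn v
    exact ⟨⟨(v, g), hg⟩, rfl⟩
  · rintro e rfl
    rfl
  · rintro e rfl e' he' (hee' : e.1.1 = e'.1.1)
    exact Subtype.ext (Prod.ext hee' (congrArg (fun w => w.1.2) he').symm)
  · intro e (he : X.src e = w.1.1)
    have hw : ((X.derived G α).src (e, w.1.2)) = w.1 := Prod.ext he rfl
    have hs : (X.derived G α).Reach z ((X.derived G α).src (e, w.1.2)) := hw ▸ w.2
    exact ⟨⟨(e, w.1.2), hs, ((X.derived G α).reach_tgt_iff_src _).mpr hs⟩, Subtype.ext hw, rfl⟩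

end

section

variable {α : Voltage X G} {z : (X.derived G α).V} {H : Subgroup G}
  (hH : ∀ h : G, h ∈ H ↔ (X.derived G α).Reach z (z.1, h * z.2))
  {φ : X.V → G} (hφ : ∀ v, (X.derived G α).Reach z (v, φ v))

include hH

theorem reach_smul_of_mem {h : G} (hh : h ∈ H) {w : (X.derived G α).V}
    (hw : (X.derived G α).Reach z w) : (X.derived G α).Reach z (w.1, h * w.2) :=
  .trans _ _ _ ((hH h).mp hh) (reach_smul α h hw)

theorem reach_smul_iff {h : G} (hh : h ∈ H) {w : (X.derived G α).V} :
    (X.derived G α).Reach z (w.1, h * w.2) ↔ (X.derived G α).Reach z w := by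
  refine ⟨fun hw => ?_, reach_smul_of_mem hH hh⟩
  obtain ⟨v, g⟩ := w
  simpa using reach_smul_of_mem hH (inv_mem hh) hw

include hφ in
theorem reach_iff_mul_inv_mem (v : X.V) (g : G) :
    (X.derived G α).Reach z (v, g) ↔ g * (φ v)⁻¹ ∈ H := by
  have hlift := reach_smul α (g * (φ v)⁻¹) (hφ v)
  rw [inv_mul_cancel_right] at hlift
  rw [hH]
  exact ⟨fun h => .trans _ _ _ h (.symm _ _ hlift), fun h => .trans _ _ _ h hlift⟩

def componentVoltage : Voltage X H where
  fn e := ⟨φ (X.src e) * α.fn e * (φ (X.tgt e))⁻¹, by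
    rw [← reach_iff_mul_inv_mem hH hφ]
    exact .trans _ _ _ (hφ (X.src e)) (.rel _ _ ⟨(e, φ (X.src e)), rfl, rfl⟩)⟩
  compat e := by
    ext
    simp only [X.src_inv, X.tgt_inv, α.compat, InvMemClass.coe_inv]
    group

def componentIsoDerived :
    SerreIso ((X.derived G α).component z) (X.derived H (componentVoltage hH hφ)) where
  onV := (Equiv.subtypeEquivRight fun (p : X.V × G) => reach_iff_mul_inv_mem hH hφ p.1 p.2).trans
    (cosetShiftEquiv H φ)
  onE := (Equiv.subtypeEquivRight fun (e : X.E × G) =>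
    (and_iff_left_of_imp ((X.derived G α).reach_tgt_iff_src e).mpr).trans
      (reach_iff_mul_inv_mem hH hφ _ e.2)).trans (cosetShiftEquiv H (φ ∘ X.src))
  map_src e := rfl
  map_tgt e := Prod.ext rfl <| Subtype.ext <|
    show e.1.2 * (φ (X.src e.1.1))⁻¹ * (φ (X.src e.1.1) * α.fn e.1.1 * (φ (X.tgt e.1.1))⁻¹) =
      e.1.2 * α.fn e.1.1 * (φ (X.tgt e.1.1))⁻¹ by group
  map_inv e := Prod.ext rfl <| Subtype.ext <|
    show e.1.2 * (φ (X.src e.1.1))⁻¹ * (φ (X.src e.1.1) * α.fn e.1.1 * (φ (X.tgt e.1.1))⁻¹) =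
      e.1.2 * α.fn e.1.1 * (φ (X.src (X.inv e.1.1)))⁻¹ by rw [X.src_inv]; group

include hφ in
theorem isSheeted_componentProj :
    IsSheeted (componentProj α z).toDigraphHom (Nat.card H) := fun x =>
  calc Nat.card {w : ((X.derived G α).component z).V // w.1.1 = x}
      = Nat.card {q : X.V × H // q.1 = x} :=
        Nat.card_congr ((componentIsoDerived hH hφ).onV.subtypeEquiv fun _ => Iff.rfl)
    _ = Nat.card H :=
        Nat.card_congr <|
          Equiv.prodSubtypeFstEquivSubtypeProd.trans (Equiv.uniqueProd H {a // a = x})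

def componentSmul (h : H) :
    Equiv.Perm ((X.derived G α).component z).V × Equiv.Perm ((X.derived G α).component z).E :=
  (((Equiv.refl X.V).prodCongr (Equiv.mulLeft h.1)).subtypeEquiv fun _ =>
      (reach_smul_iff hH h.2).symm,
    ((Equiv.refl X.E).prodCongr (Equiv.mulLeft h.1)).subtypeEquiv fun e => by
      change _ ↔ _ ∧ (X.derived G α).Reach z (X.tgt e.1, h * e.2 * α.fn e.1)
      rw [mul_assoc]
      exact and_congr (reach_smul_iff hH h.2).symm (reach_smul_iff hH h.2).symm)

theorem componentSmul_mem (h : H) :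
    componentSmul hH h ∈ SerreDeckGroup (componentProj α z) :=
  ⟨fun _ => rfl, fun _ => Subtype.ext (Prod.ext rfl (mul_assoc _ _ _)),
    fun _ => Subtype.ext (Prod.ext rfl (mul_assoc _ _ _)), fun _ => rfl, fun _ => rfl⟩

def componentSmulHom : H →* SerreDeckGroup (componentProj α z) where
  toFun h := ⟨componentSmul hH h, componentSmul_mem hH h⟩
  map_one' := Subtype.ext <| Prod.ext (Equiv.ext fun _ => Subtype.ext (Prod.ext rfl (one_mul _)))
    (Equiv.ext fun _ => Subtype.ext (Prod.ext rfl (one_mul _)))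
  map_mul' _ _ := Subtype.ext <| Prod.ext
    (Equiv.ext fun _ => Subtype.ext (Prod.ext rfl (mul_assoc _ _ _)))
    (Equiv.ext fun _ => Subtype.ext (Prod.ext rfl (mul_assoc _ _ _)))

end

section

variable {α : Voltage X G} {z : (X.derived G α).V}
  {σ : Equiv.Perm ((X.derived G α).component z).V × Equiv.Perm ((X.derived G α).component z).E}
  (hσ : σ ∈ SerreDeckGroup (componentProj α z))

include hσ

theorem deck_apply_edge (e : ((X.derived G α).component z).E) :
    (σ.2 e).1 = (e.1.1, (σ.1 (((X.derived G α).component z).src e)).1.2) := by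
  obtain ⟨hsrc, -, -, -, hfib⟩ := hσ
  exact Prod.ext (hfib e) (congrArg (fun w => w.1.2) (hsrc e))

theorem deck_apply_eq_smul {h : G} (hz : (σ.1 ⟨z, .refl z⟩).1 = (z.1, h * z.2))
    (w : ((X.derived G α).component z).V) : (σ.1 w).1 = (w.1.1, h * w.1.2) := by
  let p (a : (X.derived G α).V) : Prop :=
    ∀ ha : (X.derived G α).Reach z a, (σ.1 ⟨a, ha⟩).1 = (a.1, h * a.2)
  refine Digraph'.Reach.of_edge_iff (p := p) (fun _ => hz) (fun e hs => ?_) w.2 w.2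
  have ht := ((X.derived G α).reach_tgt_iff_src e).mpr hs
  let ε : ((X.derived G α).component z).E := ⟨e, hs, ht⟩
  have hεs : (σ.1 ⟨_, hs⟩).1 = (X.src e.1, (σ.1 ⟨_, hs⟩).1.2) :=
    Prod.ext (hσ.2.2.2.1 ⟨_, hs⟩) rfl
  have hεt : (σ.1 ⟨_, ht⟩).1 = (X.tgt e.1, (σ.1 ⟨_, hs⟩).1.2 * α.fn e.1) := by
    have hσε : (X.derived G α).tgt (σ.2 ε).1 = (σ.1 ⟨_, ht⟩).1 := congrArg Subtype.val (hσ.2.1 ε)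
    rw [← hσε, deck_apply_edge hσ ε]
    rfl
  change (∀ _, _) ↔ (∀ _, _)
  rw [forall_prop_of_true hs, forall_prop_of_true ht, hεt, hεs]
  change _ = (X.src e.1, h * e.2) ↔ _ = (X.tgt e.1, h * (e.2 * α.fn e.1))
  simp only [Prod.mk.injEq, true_and, ← mul_assoc, mul_left_inj]

end

variable {α : Voltage X G} {z : (X.derived G α).V} {H : Subgroup G}
  (hH : ∀ h : G, h ∈ H ↔ (X.derived G α).Reach z (z.1, h * z.2))

theorem componentSmulHom_bijective : Function.Bijective (componentSmulHom hH) := by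
  let z₀ : ((X.derived G α).component z).V := ⟨z, .refl z⟩
  refine ⟨fun h h' hhh' => Subtype.ext (mul_right_cancel (b := z.2) ?_), fun σ => ?_⟩
  · exact congrArg (fun σ : SerreDeckGroup (componentProj α z) => (σ.1.1 z₀).1.2) hhh'
  · set h := (σ.1.1 z₀).1.2 * z.2⁻¹
    have hz : (σ.1.1 z₀).1 = (z.1, h * z.2) := Prod.ext (σ.2.2.2.2.1 z₀) (by simp [h])
    have hσ w := deck_apply_eq_smul σ.2 hz w
    have hh : h ∈ H := (hH h).mpr (hz ▸ (σ.1.1 z₀).2)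
    refine ⟨⟨h, hh⟩, Subtype.ext (Prod.ext ?_ ?_)⟩
    · exact Equiv.ext fun w => Subtype.ext (hσ w).symm
    · refine Equiv.ext fun e => Subtype.ext ?_
      rw [deck_apply_edge σ.2 e, hσ]
      rfl

noncomputable def deckGroupEquiv : SerreDeckGroup (componentProj α z) ≃* H :=
  (MulEquiv.ofBijective _ (componentSmulHom_bijective hH)).symm

end Voltage

theorem component_of_derived_graph_isGalois_general
    (X : SerreGraph)
    (hconn : X.toDigraph'.Connected)
    (G : Type) [CommGroup G] (α : Voltage X G)
    (z : (X.derived G α).V)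
    (H : Subgroup G)
    (hH : ∀ h : G, h ∈ H ↔
      (X.derived G α).toDigraph'.Reach z (z.1, h * z.2)) :
    (∃ β : Voltage X ↥H,
      Nonempty (SerreIso ((X.derived G α).component z) (X.derived ↥H β))) ∧
    ∃ f : SerreHom ((X.derived G α).component z) X,
      (∀ w, f.onV w = (w.1).1) ∧ (∀ e, f.onE e = (e.1).1) ∧
      IsGraphCovering f.toDigraphHom ∧
      IsGaloisSerreCov f ∧
      Nonempty (↥(SerreDeckGroup f) ≃* H) := by
  choose φ hφ using Voltage.exists_reach_fiber α z hconn
  have hcov := Voltage.isGraphCovering_componentProj α z hconn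
  have hdeck := Voltage.deckGroupEquiv hH
  exact ⟨⟨_, ⟨Voltage.componentIsoDerived hH hφ⟩⟩, Voltage.componentProj α z,
    fun _ => rfl, fun _ => rfl, hcov,
    ⟨hcov, _, Voltage.isSheeted_componentProj hH hφ, Nat.card_congr hdeck.toEquiv⟩, ⟨hdeck⟩⟩

/-- **Lemma (connected components of derived graphs of abelian voltage assignments).**
Let `X` be a finite connected undirected graph and let `α` be a voltage assignment on
`X` with values in a finite abelian group `G`.  Let `Z` be a connected component of
the derived graph `X(G, α)` (the component of a vertex `z`), and let `H ≤ G` be the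
stabilizer of `Z` under the action of `G` on the set of connected components of
`X(G, α)` (induced by `h • (v, g) = (v, h * g)`).  Then `Z` is isomorphic to the
derived graph of an `H`-valued voltage assignment on `X`, and `Z/X` is a Galois
covering whose Galois group is isomorphic to `H`. -/
theorem component_of_derived_graph_isGalois
    (X : SerreGraph) (hV : Finite X.V) (hE : Finite X.E)
    (hconn : X.toDigraph'.Connected)
    (G : Type) [CommGroup G] [Finite G] (α : Voltage X G)
    (z : (X.derived G α).V)
    (H : Subgroup G)
    (hH : ∀ h : G, h ∈ H ↔
      (X.derived G α).toDigraph'.Reach z (z.1, h * z.2)) :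
    (∃ β : Voltage X ↥H,
      Nonempty (SerreIso ((X.derived G α).component z) (X.derived ↥H β))) ∧
    ∃ f : SerreHom ((X.derived G α).component z) X,
      (∀ w, f.onV w = (w.1).1) ∧ (∀ e, f.onE e = (e.1).1) ∧
      IsGraphCovering f.toDigraphHom ∧
      IsGaloisSerreCov f ∧
      Nonempty (↥(SerreDeckGroup f) ≃* H) :=
  component_of_derived_graph_isGalois_general X hconn G α z H hH
end

section
/- Let p be a prime with p ≡ 3 (mod 4). Then there exist infinitely many primes l such that l ≥ 5, l ≠ p, −l is not a quadratic residue modulo p, and l − 1 has a prime factor different from 2 and 3. -/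
/-! Take primes `l ≡ 1 (mod 5p)`, of which there are infinitely many by the elementary
cyclotomic argument (no Dirichlet needed). Then `-l ≡ -1` is a non-residue modulo `p` because
`p ≡ 3 (mod 4)`, and `5` divides `l - 1`. -/

theorem ZMod.not_isSquare_neg_natCast_of_modEq_one {p l : ℕ} [Fact p.Prime] (hp4 : p % 4 = 3)
    (hl : l ≡ 1 [MOD p]) : ¬ IsSquare (-(l : ZMod p)) := by
  rw [(ZMod.natCast_eq_natCast_iff l 1 p).mpr hl, Nat.cast_one, ZMod.exists_sq_eq_neg_one_iff]
  exact not_not.mpr hp4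

theorem Nat.ModEq.ne_of_one_lt {n a : ℕ} (hn : 1 < n) (h : a ≡ 1 [MOD n]) : a ≠ n := by
  rintro rfl
  simp [Nat.ModEq, Nat.mod_self, Nat.mod_eq_of_lt hn] at h

/-- **Existence of infinitely many auxiliary primes.**
Let `p` be a prime with `p ≡ 3 (mod 4)`.  Then there exist infinitely many primes `l`
such that `l ≥ 5`, `l ≠ p`, `-l` is not a quadratic residue modulo `p`, and `l - 1`
has a prime factor different from `2` and `3`. -/
theorem infinitely_many_auxiliary_primes (p : ℕ) (hp : p.Prime) (hp4 : p % 4 = 3) :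
    {l : ℕ | l.Prime ∧ 5 ≤ l ∧ l ≠ p ∧ ¬ IsSquare (-(l : ZMod p)) ∧
      ∃ q : ℕ, q.Prime ∧ q ≠ 2 ∧ q ≠ 3 ∧ q ∣ (l - 1)}.Infinite := by
  have := Fact.mk hp
  refine ((Nat.infinite_setOfPred_prime_modEq_one (k := 5 * p) (by simp [hp.ne_zero])).sdiff
    (Set.finite_Iio 5)).mono ?_
  rintro l ⟨⟨hl, hl1⟩, hl5 : ¬ l < 5⟩
  have hl1p : l ≡ 1 [MOD p] := hl1.of_mul_left 5
  have hl15 : l ≡ 1 [MOD 5] := hl1.of_mul_right p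
  exact ⟨hl, not_lt.mp hl5, hl1p.ne_of_one_lt hp.one_lt,
    ZMod.not_isSquare_neg_natCast_of_modEq_one hp4 hl1p,
    5, Nat.prime_five, by norm_num, by norm_num, (Nat.modEq_iff_dvd' hl.one_le).mp hl15.symm⟩
end
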